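/- arXiv:1910.05512 — 2 statements merged into one kernel-verified Lean document; each statement's English description precedes it below -/
import Mathlib

section
/- Let S₁, A₁, S₂, A₂, S₂' be finite sets. Suppose p : S₁ × S₂ × A₁ × A₂ × S₂' → ℝ≥0 is a joint probability mass function, and define the conditional q(s₂'|s₂,a₂) = p(s₂,a₂,s₂')/p(s₂,a₂) whenever the marginal p(s₂,a₂) > 0. Suppose the marginal over (s₁,a₁) given (s₂,a₂) depends on a differentiable parameter θ only through a factor π_θ(a₁|s₁) with ∑_{a₁} π_θ(a₁|s₁) = 1 for all θ and s₁, and the transition kernel p(s₂'|s₁,s₂,a₁,a₂) and the distribution p(s₁|s₂,a₂) are independent of θ. Then ∑_{s₁,s₂,a₁,a₂,s₂'} p_θ(s₁,s₂,a₁,a₂,s₂') · d/dθ [−log q_θ(s₂'|s₂,a₂)] = 0. -/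
/-!
Summing the joint weight `m · d · π_θ · k` over the hidden pair `(s₁, a₁)` leaves `m · q_θ`, so
the expected score becomes `∑ m(s₂,a₂) ∑_{s₂'} q_θ · (-log q_θ)' = -∑ m(s₂,a₂) ∑_{s₂'} q_θ'`.
Each `q_θ(· | s₂, a₂)` is a probability vector for every `θ`, so its derivatives sum to zero.
-/

open Finset

section Score

variable {ι : Type*} [Fintype ι] {θ : ℝ}

theorem mul_deriv_neg_log {f : ℝ → ℝ} (hf : DifferentiableAt ℝ f θ) (hf0 : f θ ≠ 0) :
    f θ * deriv (fun t => -Real.log (f t)) θ = -deriv f θ := by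
  rw [(hf.hasDerivAt.log hf0).fun_neg.deriv]
  field_simp

theorem sum_deriv_eq_zero_of_sum_eq_one {f : ℝ → ι → ℝ}
    (hf : ∀ i, DifferentiableAt ℝ (fun t => f t i) θ) (hsum : ∀ t, ∑ i, f t i = 1) :
    ∑ i, deriv (fun t => f t i) θ = 0 := by
  rw [← deriv_fun_sum fun i _ => hf i]
  simp [hsum]

theorem sum_mul_deriv_neg_log_eq_zero {f : ℝ → ι → ℝ}
    (hf : ∀ i, DifferentiableAt ℝ (fun t => f t i) θ) (hf0 : ∀ i, f θ i ≠ 0)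
    (hsum : ∀ t, ∑ i, f t i = 1) :
    ∑ i, f θ i * deriv (fun t => -Real.log (f t i)) θ = 0 := by
  simp only [fun i => mul_deriv_neg_log (hf i) (hf0 i), sum_neg_distrib,
    sum_deriv_eq_zero_of_sum_eq_one hf hsum, neg_zero]

end Score

theorem sum_mixture_eq_one {S A T : Type*} [Fintype S] [Fintype A] [Fintype T]
    (k : S → A → T → ℝ) (d : S → ℝ) (π : S → A → ℝ)
    (hk : ∀ s a, ∑ t, k s a t = 1) (hd : ∑ s, d s = 1) (hπ : ∀ s, ∑ a, π s a = 1) :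
    ∑ t, ∑ s, ∑ a, k s a t * d s * π s a = 1 := by
  rw [sum_comm]
  simp_rw [sum_comm (γ := T), ← sum_mul, hk, one_mul, mul_comm (d _), ← sum_mul, hπ, one_mul, hd]

theorem eiti_second_term_zero_general
    {S₁ A₁ S₂ A₂ S₂' : Type*} [Fintype S₁] [Fintype A₁] [Fintype S₂] [Fintype A₂] [Fintype S₂']
    (m : S₂ → A₂ → ℝ) (d : S₂ → A₂ → S₁ → ℝ)
    (k : S₁ → S₂ → A₁ → A₂ → S₂' → ℝ)
    (π : ℝ → S₁ → A₁ → ℝ)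
    (hdsum : ∀ s₂ a₂, ∑ s₁ : S₁, d s₂ a₂ s₁ = 1)
    (hksum : ∀ s₁ s₂ a₁ a₂, ∑ s₂' : S₂', k s₁ s₂ a₁ a₂ s₂' = 1)
    (hπsum : ∀ θ s₁, ∑ a₁ : A₁, π θ s₁ a₁ = 1)
    (hπdiff : ∀ s₁ a₁, Differentiable ℝ (fun θ => π θ s₁ a₁))
    (q : ℝ → S₂ → A₂ → S₂' → ℝ)
    (hq : ∀ θ s₂ a₂ s₂', q θ s₂ a₂ s₂' =
      ∑ s₁ : S₁, ∑ a₁ : A₁, k s₁ s₂ a₁ a₂ s₂' * d s₂ a₂ s₁ * π θ s₁ a₁)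
    (hqpos : ∀ θ s₂ a₂ s₂', 0 < q θ s₂ a₂ s₂')
    (θ : ℝ) :
    ∑ s₁ : S₁, ∑ s₂ : S₂, ∑ a₁ : A₁, ∑ a₂ : A₂, ∑ s₂' : S₂',
      (m s₂ a₂ * d s₂ a₂ s₁ * π θ s₁ a₁ * k s₁ s₂ a₁ a₂ s₂') *
        deriv (fun θ' => - Real.log (q θ' s₂ a₂ s₂')) θ = 0 := by
  have hq_sum : ∀ t s₂ a₂, ∑ s₂', q t s₂ a₂ s₂' = 1 := fun t s₂ a₂ => by
    simp only [hq]
    exact sum_mixture_eq_one _ _ _ (fun s₁ a₁ => hksum s₁ s₂ a₁ a₂) (hdsum s₂ a₂) (hπsum t)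
  have hq_diff : ∀ s₂ a₂ s₂', DifferentiableAt ℝ (fun t => q t s₂ a₂ s₂') θ := by
    intro s₂ a₂ s₂'
    simp only [hq]
    fun_prop
  have hq_marginal : ∀ s₂ a₂, ∑ s₁, ∑ a₁, ∑ s₂',
      (m s₂ a₂ * d s₂ a₂ s₁ * π θ s₁ a₁ * k s₁ s₂ a₁ a₂ s₂') *
        deriv (fun θ' => - Real.log (q θ' s₂ a₂ s₂')) θ =
      m s₂ a₂ * ∑ s₂', q θ s₂ a₂ s₂' * deriv (fun θ' => - Real.log (q θ' s₂ a₂ s₂')) θ := by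
    intro s₂ a₂
    simp_rw [hq θ s₂ a₂, sum_mul, mul_sum]
    rw [sum_comm_cycle]
    exact sum_congr rfl fun s₂' _ => sum_congr rfl fun s₁ _ => sum_congr rfl fun a₁ _ => by ring
  calc _ = ∑ s₂, ∑ a₂, ∑ s₁, ∑ a₁, ∑ s₂',
        (m s₂ a₂ * d s₂ a₂ s₁ * π θ s₁ a₁ * k s₁ s₂ a₁ a₂ s₂') *
          deriv (fun θ' => - Real.log (q θ' s₂ a₂ s₂')) θ := by
        rw [sum_comm]
        exact sum_congr rfl fun s₂ _ => sum_comm_cycle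
    _ = 0 := by
      simp only [hq_marginal, sum_mul_deriv_neg_log_eq_zero (hq_diff _ _)
        (fun _ => (hqpos _ _ _ _).ne') (hq_sum · _ _), mul_zero, sum_const_zero]

/-- Second term of the EITI mutual-information policy gradient vanishes.
Setting: joint pmf `p_θ(s₁,s₂,a₁,a₂,s₂') = m(s₂,a₂) · d(s₁|s₂,a₂) · π_θ(a₁|s₁) · k(s₂'|s₁,s₂,a₁,a₂)`
and conditional `q_θ(s₂'|s₂,a₂) = ∑_{s₁*,a₁*} k(s₂'|s₁*,s₂,a₁*,a₂) d(s₁*|s₂,a₂) π_θ(a₁*|s₁*)`. -/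
theorem eiti_second_term_zero
    {S₁ A₁ S₂ A₂ S₂' : Type*} [Fintype S₁] [Fintype A₁] [Fintype S₂] [Fintype A₂] [Fintype S₂']
    (m : S₂ → A₂ → ℝ) (d : S₂ → A₂ → S₁ → ℝ)
    (k : S₁ → S₂ → A₁ → A₂ → S₂' → ℝ)
    (π : ℝ → S₁ → A₁ → ℝ)
    (hm : ∀ s₂ a₂, 0 ≤ m s₂ a₂)
    (hd : ∀ s₂ a₂ s₁, 0 ≤ d s₂ a₂ s₁)
    (hdsum : ∀ s₂ a₂, ∑ s₁ : S₁, d s₂ a₂ s₁ = 1)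
    (hk : ∀ s₁ s₂ a₁ a₂ s₂', 0 ≤ k s₁ s₂ a₁ a₂ s₂')
    (hksum : ∀ s₁ s₂ a₁ a₂, ∑ s₂' : S₂', k s₁ s₂ a₁ a₂ s₂' = 1)
    (hπpos : ∀ θ s₁ a₁, 0 < π θ s₁ a₁)
    (hπsum : ∀ θ s₁, ∑ a₁ : A₁, π θ s₁ a₁ = 1)
    (hπdiff : ∀ s₁ a₁, Differentiable ℝ (fun θ => π θ s₁ a₁))
    (q : ℝ → S₂ → A₂ → S₂' → ℝ)
    (hq : ∀ θ s₂ a₂ s₂', q θ s₂ a₂ s₂' =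
      ∑ s₁ : S₁, ∑ a₁ : A₁, k s₁ s₂ a₁ a₂ s₂' * d s₂ a₂ s₁ * π θ s₁ a₁)
    (hqpos : ∀ θ s₂ a₂ s₂', 0 < q θ s₂ a₂ s₂')
    (θ : ℝ) :
    ∑ s₁ : S₁, ∑ s₂ : S₂, ∑ a₁ : A₁, ∑ a₂ : A₂, ∑ s₂' : S₂',
      (m s₂ a₂ * d s₂ a₂ s₁ * π θ s₁ a₁ * k s₁ s₂ a₁ a₂ s₂') *
        deriv (fun θ' => - Real.log (q θ' s₂ a₂ s₂')) θ = 0 :=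
  eiti_second_term_zero_general m d k π hdsum hksum hπsum hπdiff q hq hqpos θ
end

section
/- Let S₁, S₂, A₁, A₂ be finite sets, p a probability mass function on S₁ × S₂ × A₁ × A₂, and for each (s₂,a₂) with positive marginal let p⁻(s₁*,a₁*|s₂,a₂) be any conditional probability mass function on S₁ × A₁ (i.e., summing to 1). Let r̃₂ : S₁ × S₂ × A₁ × A₂ → ℝ and define the counterfactual reward r̃₂⁻(s₂,a₂) = ∑_{s₁*,a₁*} p⁻(s₁*,a₁*|s₂,a₂) r̃₂(s₁*,s₂,a₁*,a₂). Suppose p factors as p(s₁,s₂,a₁,a₂) = p(s₂,a₂) · p₁(s₁|s₂) · π_θ(a₁|s₁) where only π_θ depends on a differentiable parameter θ, with ∑_{a₁} π_θ(a₁|s₁) = 1 for all θ, s₁, and p⁻ is independent of θ. Then ∑_{s₁,s₂,a₁,a₂} (d/dθ p_θ(s₁,s₂,a₁,a₂)) · r̃₂⁻(s₂,a₂) = 0. -/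
/-!
The policy is normalised for every `θ`, so its derivatives sum to zero over the actions `a₁`.
Every other factor of the summand, including the counterfactual reward, is independent of `a₁`
and `θ`, so it can be pulled out of the `a₁`-sum, which then vanishes.
-/

open Finset

theorem Finset.sum_deriv_eq_zero_of_sum_eq_const {ι 𝕜 F : Type*} [NontriviallyNormedField 𝕜]
    [NormedAddCommGroup F] [NormedSpace 𝕜 F] {s : Finset ι} {f : ι → 𝕜 → F} {x : 𝕜} {c : F}
    (hf : ∀ i ∈ s, DifferentiableAt 𝕜 (f i) x) (hc : ∀ y, ∑ i ∈ s, f i y = c) :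
    ∑ i ∈ s, deriv (f i) x = 0 := by
  rw [← deriv_fun_sum hf, funext hc, deriv_const]

theorem grad_joint_counterfactual_reward_zero_general
    {S₁ S₂ A₁ A₂ : Type*} [Fintype S₁] [Fintype S₂] [Fintype A₁] [Fintype A₂]
    (m : S₂ → A₂ → ℝ) (p₁ : S₂ → S₁ → ℝ)
    (π : ℝ → S₁ → A₁ → ℝ)
    (pminus : S₂ → A₂ → S₁ → A₁ → ℝ)
    (r₂ : S₁ → S₂ → A₁ → A₂ → ℝ)
    (hπsum : ∀ θ s₁, ∑ a₁ : A₁, π θ s₁ a₁ = 1)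
    (hπdiff : ∀ s₁ a₁, Differentiable ℝ (fun θ => π θ s₁ a₁))
    (θ : ℝ) :
    ∑ s₁ : S₁, ∑ s₂ : S₂, ∑ a₁ : A₁, ∑ a₂ : A₂,
      deriv (fun θ' => m s₂ a₂ * p₁ s₂ s₁ * π θ' s₁ a₁) θ *
        (∑ s₁' : S₁, ∑ a₁' : A₁, pminus s₂ a₂ s₁' a₁' * r₂ s₁' s₂ a₁' a₂) = 0 := by
  have hscore : ∀ s₁, ∑ a₁ : A₁, deriv (fun θ' => π θ' s₁ a₁) θ = 0 := fun s₁ =>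
    sum_deriv_eq_zero_of_sum_eq_const (fun a₁ _ => (hπdiff s₁ a₁).differentiableAt)
      (fun θ' => hπsum θ' s₁)
  refine sum_eq_zero fun s₁ _ => sum_eq_zero fun s₂ _ => ?_
  rw [sum_comm]
  refine sum_eq_zero fun a₂ _ => ?_
  simp only [deriv_const_mul_field']
  rw [← sum_mul, ← mul_sum, hscore, mul_zero, zero_mul]

/-- Lemma 2 of the paper: the policy gradient of the joint distribution weighted by a
counterfactual reward depending only on `(s₂, a₂)` sums to zero. -/
theorem grad_joint_counterfactual_reward_zero
    {S₁ S₂ A₁ A₂ : Type*} [Fintype S₁] [Fintype S₂] [Fintype A₁] [Fintype A₂]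
    (m : S₂ → A₂ → ℝ) (p₁ : S₂ → S₁ → ℝ)
    (π : ℝ → S₁ → A₁ → ℝ)
    (pminus : S₂ → A₂ → S₁ → A₁ → ℝ)
    (r₂ : S₁ → S₂ → A₁ → A₂ → ℝ)
    (hm : ∀ s₂ a₂, 0 ≤ m s₂ a₂)
    (hp₁ : ∀ s₂ s₁, 0 ≤ p₁ s₂ s₁)
    (hpminus_nonneg : ∀ s₂ a₂ s₁ a₁, 0 ≤ pminus s₂ a₂ s₁ a₁)
    (hpminus_sum : ∀ s₂ a₂, ∑ s₁ : S₁, ∑ a₁ : A₁, pminus s₂ a₂ s₁ a₁ = 1)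
    (hπpos : ∀ θ s₁ a₁, 0 < π θ s₁ a₁)
    (hπsum : ∀ θ s₁, ∑ a₁ : A₁, π θ s₁ a₁ = 1)
    (hπdiff : ∀ s₁ a₁, Differentiable ℝ (fun θ => π θ s₁ a₁))
    (θ : ℝ) :
    ∑ s₁ : S₁, ∑ s₂ : S₂, ∑ a₁ : A₁, ∑ a₂ : A₂,
      deriv (fun θ' => m s₂ a₂ * p₁ s₂ s₁ * π θ' s₁ a₁) θ *
        (∑ s₁' : S₁, ∑ a₁' : A₁, pminus s₂ a₂ s₁' a₁' * r₂ s₁' s₂ a₁' a₂) = 0 :=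
  grad_joint_counterfactual_reward_zero_general m p₁ π pminus r₂ hπsum hπdiff θ
end
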